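/- arXiv:1902.07741 — 10 statements merged into one kernel-verified Lean document; each statement's English description precedes it below -/
import Mathlib

section
/- Adding the excluded middle axioms {a ∨ ¬a : a ∈ At} makes equilibrium logic collapse to classical logic: T is a stable model of Γ ∪ {a ∨ ¬a : a ∈ At} if and only if T is a classical model of Γ. -/
/-- Propositional interpretations are sets of atoms (atoms are naturals). -/
abbrev Interp := Set ℕ

/-- Propositional formulas. -/
inductive PForm : Type
  | bot : PForm
  | atom : ℕ → PForm
  | and : PForm → PForm → PForm
  | or : PForm → PForm → PForm
  | imp : PForm → PForm → PForm

/-- Classical satisfaction. -/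
def csat (T : Interp) : PForm → Prop
  | .bot => False
  | .atom a => a ∈ T
  | .and φ ψ => csat T φ ∧ csat T ψ
  | .or φ ψ => csat T φ ∨ csat T ψ
  | .imp φ ψ => csat T φ → csat T ψ

/-- Here-and-There satisfaction. -/
def htsat (H T : Interp) : PForm → Prop
  | .bot => False
  | .atom a => a ∈ H
  | .and φ ψ => htsat H T φ ∧ htsat H T ψ
  | .or φ ψ => htsat H T φ ∨ htsat H T ψ
  | .imp φ ψ => (csat T φ → csat T ψ) ∧ (htsat H T φ → htsat H T ψ)

/-- Propositional negation. -/
def pneg (φ : PForm) : PForm := .imp φ .bot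

/-- Stable (equilibrium) model of a propositional theory. -/
def stable (Γ : Set PForm) (T : Interp) : Prop :=
  (∀ φ ∈ Γ, htsat T T φ) ∧ ¬ ∃ H, H ⊂ T ∧ ∀ φ ∈ Γ, htsat H T φ

/-- Epistemic formulas (with modality `L`). -/
inductive EForm : Type
  | bot : EForm
  | atom : ℕ → EForm
  | and : EForm → EForm → EForm
  | or : EForm → EForm → EForm
  | imp : EForm → EForm → EForm
  | L : EForm → EForm

/-- Epistemic negation. -/
def eneg (φ : EForm) : EForm := .imp φ .bot

/-- Belief views: sets of HT-pairs (here, there). -/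
abbrev View := Set (Interp × Interp)

/-- Total projection Wᵗ of a view. -/
def tproj (W : View) : View := {p | ∃ q ∈ W, p = (q.2, q.2)}

/-- FAEEL satisfaction ⟨W,H,T⟩ ⊨ φ. -/
def esat : EForm → View → Interp → Interp → Prop
  | .bot, _, _, _ => False
  | .atom a, _, H, _ => a ∈ H
  | .and φ ψ, W, H, T => esat φ W H T ∧ esat ψ W H T
  | .or φ ψ, W, H, T => esat φ W H T ∨ esat ψ W H T
  | .imp φ ψ, W, H, T =>
      (esat φ W H T → esat ψ W H T) ∧ (esat φ (tproj W) T T → esat ψ (tproj W) T T)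
  | .L φ, W, _, _ => ∀ p ∈ W, esat φ W p.1 p.2

/-- Every pair of the view is an HT-pair (here ⊆ there). -/
def isHTView (W : View) : Prop := ∀ p ∈ W, p.1 ⊆ p.2

/-- A view is total if all its pairs are total. -/
def totalView (W : View) : Prop := ∀ p ∈ W, p.1 = p.2

/-- Lift a set of propositional interpretations to a total view. -/
def liftV (Ws : Set Interp) : View := {p | ∃ T ∈ Ws, p = (T, T)}

/-- Embedding of propositional formulas into epistemic formulas. -/
def e : PForm → EForm
  | .bot => .bot
  | .atom a => .atom a
  | .and φ ψ => .and (e φ) (e ψ)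
  | .or φ ψ => .or (e φ) (e ψ)
  | .imp φ ψ => .imp (e φ) (e ψ)

/-- ⟨W,H,T⟩ is a belief model of Γ: all pairs in W ∪ {⟨H,T⟩} satisfy all formulas. -/
def isBeliefModel (W : View) (H T : Interp) (Γ : Set EForm) : Prop :=
  ∀ φ ∈ Γ, ∀ p ∈ insert (H, T) W, esat φ W p.1 p.2

/-- The order ⪯ on belief interpretations. -/
def bleq (W' : View) (H' T' : Interp) (W : View) (H T : Interp) : Prop :=
  T' = T ∧ H' ⊆ H ∧
  (∀ p ∈ W, ∃ H'', (H'', p.2) ∈ W' ∧ H'' ⊆ p.1) ∧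
  (∀ p ∈ W', ∃ H'', (H'', p.2) ∈ W ∧ p.1 ⊆ H'')

/-- The strict order ≺ on belief interpretations. -/
def blt (W' : View) (H' T' : Interp) (W : View) (H T : Interp) : Prop :=
  bleq W' H' T' W H T ∧ ¬ (W' = W ∧ H' = H ∧ T' = T)

/-- ⟨W,T⟩ is an equilibrium belief (KD45-equilibrium) model of Γ. -/
def eqBelief (W : View) (T : Interp) (Γ : Set EForm) : Prop :=
  isBeliefModel W T T Γ ∧
  ¬ ∃ W' H' T', isBeliefModel W' H' T' Γ ∧ blt W' H' T' W T T

/-- ⟨W,T⟩ is a weak KD45-equilibrium model of Γ (minimal among semi-total belief models). -/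
def weakEqBelief (W : View) (T : Interp) (Γ : Set EForm) : Prop :=
  isBeliefModel W T T Γ ∧
  ¬ ∃ W' H' T', totalView W' ∧ isBeliefModel W' H' T' Γ ∧ blt W' H' T' W T T

/-- FAEEL (autoepistemic) equilibrium world view. -/
def autoWV (Ws : Set Interp) (Γ : Set EForm) : Prop :=
  Ws = {T | eqBelief (liftV Ws) T Γ}

/-- Weak autoepistemic world view. -/
def weakWV (Ws : Set Interp) (Γ : Set EForm) : Prop :=
  Ws = {T | weakEqBelief (liftV Ws) T Γ}

/-- W is an S5-HT-model of Γ. -/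
def s5model (W : View) (Γ : Set EForm) : Prop :=
  ∀ φ ∈ Γ, ∀ p ∈ W, esat φ W p.1 p.2

/-- The order ⪯ on S5-HT-interpretations. -/
def s5le (W' W : View) : Prop :=
  (∀ p ∈ W, ∃ H', (H', p.2) ∈ W' ∧ H' ⊆ p.1) ∧
  (∀ p ∈ W', ∃ H, (H, p.2) ∈ W ∧ p.1 ⊆ H)

/-- The strict order ≺ on S5-HT-interpretations. -/
def s5lt (W' W : View) : Prop := s5le W' W ∧ W' ≠ W

/-- S5-equilibrium model: total S5-HT-model minimal among S5-HT-models. -/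
def s5eq (W : View) (Γ : Set EForm) : Prop :=
  totalView W ∧ s5model W Γ ∧ ¬ ∃ W', s5model W' Γ ∧ s5lt W' W

/-- Subjective reduct of a formula w.r.t. a view: replace each maximal `L ψ`
by ⊤ if W ⊨ L ψ, by ⊥ otherwise; yields a propositional formula. -/
noncomputable def reductP : EForm → View → PForm
  | .bot, _ => .bot
  | .atom a, _ => .atom a
  | .and φ ψ, W => .and (reductP φ W) (reductP ψ W)
  | .or φ ψ, W => .or (reductP φ W) (reductP ψ W)
  | .imp φ ψ, W => .imp (reductP φ W) (reductP ψ W)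
  | .L φ, W =>
      @ite _ (∀ p ∈ W, esat φ W p.1 p.2) (Classical.propDecidable _)
        (PForm.imp .bot .bot) .bot

/-- G91-world view: W = SM[Γ^W]. -/
def g91wv (Ws : Set Interp) (Γ : Set EForm) : Prop :=
  Ws = {T | stable ((fun φ => reductP φ (liftV Ws)) '' Γ) T}

/-- Objective literals: a, ¬a, ¬¬a. -/
inductive OLit : Type
  | pos : ℕ → OLit
  | neg : ℕ → OLit
  | nneg : ℕ → OLit

/-- Body literals: objective literals and subjective literals L l, ¬L l, ¬¬L l. -/
inductive Lit : Type
  | obj : OLit → Lit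
  | kpos : OLit → Lit
  | kneg : OLit → Lit
  | knneg : OLit → Lit

/-- A rule a₁ ∨ … ∨ aₙ ← B₁ ∧ … ∧ Bₘ. -/
structure Rule where
  head : List ℕ
  body : List Lit

def olitE : OLit → EForm
  | .pos a => .atom a
  | .neg a => eneg (.atom a)
  | .nneg a => eneg (eneg (.atom a))

def litE : Lit → EForm
  | .obj l => olitE l
  | .kpos l => .L (olitE l)
  | .kneg l => eneg (.L (olitE l))
  | .knneg l => eneg (eneg (.L (olitE l)))

/-- Body of a rule as a formula (conjunction; ⊤ if empty). -/
def bodyE (r : Rule) : EForm := r.body.foldr (fun l φ => .and (litE l) φ) (eneg .bot)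

/-- Head of a rule as a formula (disjunction; ⊥ if empty). -/
def headE (r : Rule) : EForm := r.head.foldr (fun a φ => .or (.atom a) φ) .bot

/-- A rule as a formula. -/
def ruleE (r : Rule) : EForm := .imp (bodyE r) (headE r)

def headSet (r : Rule) : Set ℕ := {a | a ∈ r.head}

/-- Atoms of positive objective body literals. -/
def bodyObPos (r : Rule) : Set ℕ := {a | Lit.obj (OLit.pos a) ∈ r.body}

def olitAtom : OLit → ℕ
  | .pos a => a
  | .neg a => a
  | .nneg a => a

/-- Atoms of positive subjective body literals. -/
def bodySubPos (r : Rule) : Set ℕ := {a | ∃ l, Lit.kpos l ∈ r.body ∧ olitAtom l = a}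

/-- U is an unfounded set w.r.t. program P and (total) view W. -/
def unfoundedSet (P : Set Rule) (W : View) (U : Set (Interp × Interp)) : Prop :=
  U.Nonempty ∧ ∀ p ∈ U, ¬ ∃ r ∈ P, (headSet r ∩ p.1).Nonempty ∧
    esat (bodyE r) W p.2 p.2 ∧
    bodyObPos r ∩ p.1 = ∅ ∧
    (headSet r \ p.1) ∩ p.2 = ∅ ∧
    bodySubPos r ∩ (⋃ q ∈ U, q.1) = ∅

/-- W is founded w.r.t. P: no unfounded set all of whose pairs ⟨X,I⟩ have
I ∈ W and X ∩ I ≠ ∅. -/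
def founded (P : Set Rule) (W : View) : Prop :=
  ¬ ∃ U, unfoundedSet P W U ∧ ∀ p ∈ U, (p.2, p.2) ∈ W ∧ (p.1 ∩ p.2).Nonempty

/-- Every atom occurrence is in the scope of L. -/
def subjective : EForm → Prop
  | .bot => True
  | .atom _ => False
  | .and φ ψ => subjective φ ∧ subjective ψ
  | .or φ ψ => subjective φ ∧ subjective ψ
  | .imp φ ψ => subjective φ ∧ subjective ψ
  | .L _ => True

/-- Every occurrence of L is in the scope of negation (χ → ⊥). -/
def guarded : EForm → Prop
  | .and φ ψ => guarded φ ∧ guarded ψ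
  | .or φ ψ => guarded φ ∧ guarded ψ
  | .imp _ .bot => True
  | .imp φ ψ => guarded φ ∧ guarded ψ
  | .L _ => False
  | _ => True
lemma htsat_csat {H T : Interp} (hs : H ⊆ T) {φ : PForm} (h : htsat H T φ) : csat T φ := by
  induction φ with
  | bot => exact h
  | atom a => exact hs h
  | and φ ψ ihφ ihψ => exact ⟨ihφ h.1, ihψ h.2⟩
  | or φ ψ ihφ ihψ => exact h.elim (fun x => Or.inl (ihφ x)) (fun x => Or.inr (ihψ x))
  | imp φ ψ ihφ ihψ => exact h.1

lemma csat_htsat {T : Interp} {φ : PForm} : csat T φ → htsat T T φ := by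
  induction φ with
  | bot => exact id
  | atom a => exact id
  | and φ ψ ihφ ihψ => exact fun h => ⟨ihφ h.1, ihψ h.2⟩
  | or φ ψ ihφ ihψ => exact fun h => h.elim (fun x => Or.inl (ihφ x)) (fun x => Or.inr (ihψ x))
  | imp φ ψ ihφ ihψ => exact fun h => ⟨h, fun hφ => ihψ (h (htsat_csat (fun _ x => x) hφ))⟩

theorem stable_em_iff_classical (Γ : Set PForm) (T : Interp) :
    stable (Γ ∪ {φ | ∃ a : ℕ, φ = PForm.or (.atom a) (pneg (.atom a))}) T
      ↔ ∀ φ ∈ Γ, csat T φ := by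
  constructor
  · intro ⟨h1, _⟩ φ hφ
    exact htsat_csat (fun _ x => x) (h1 φ (Or.inl hφ))
  · intro h
    constructor
    · rintro φ (hφ | ⟨a, rfl⟩)
      · exact csat_htsat (h φ hφ)
      · by_cases ha : a ∈ T
        · exact Or.inl ha
        · exact Or.inr ⟨fun x => ha x, fun x => ha x⟩
    · rintro ⟨H, hHT, hH⟩
      obtain ⟨a, haT, haH⟩ := Set.exists_of_ssubset hHT
      have := hH (PForm.or (.atom a) (pneg (.atom a))) (Or.inr ⟨a, rfl⟩)
      rcases this with h1 | h2
      · exact haH h1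
      · exact h2.1 haT
end

section
/- For any epistemic formula φ and any belief interpretation ⟨W, ⟨H,T⟩⟩ (where W is a set of HT-interpretations), if ⟨W,H,T⟩ ⊨ φ then ⟨Wᵗ, T⟩ ⊨ φ, where Wᵗ = {Tᵢ : ⟨Hᵢ,Tᵢ⟩ ∈ W} and satisfaction on the right is the total (KD45) satisfaction. (Persistence property of FAEEL.) -/
lemma tproj_idem (W : View) : tproj (tproj W) = tproj W := by
  ext p
  constructor
  · rintro ⟨q, ⟨r, hr, rfl⟩, rfl⟩
    exact ⟨r, hr, rfl⟩
  · rintro ⟨q, hq, rfl⟩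
    exact ⟨(q.2, q.2), ⟨q, hq, rfl⟩, rfl⟩

theorem faeel_persistence (W : View) (hW : W.Nonempty) (hHT : isHTView W)
    (H T : Interp) (hsub : H ⊆ T) (φ : EForm)
    (h : esat φ W H T) : esat φ (tproj W) T T := by
  induction φ generalizing H T with
  | bot => exact h
  | atom a => exact hsub h
  | and φ ψ ihφ ihψ => exact ⟨ihφ _ _ hsub h.1, ihψ _ _ hsub h.2⟩
  | or φ ψ ihφ ihψ =>
    cases h with
    | inl h => exact Or.inl (ihφ _ _ hsub h)
    | inr h => exact Or.inr (ihψ _ _ hsub h)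
  | imp φ ψ ihφ ihψ =>
    refine ⟨h.2, ?_⟩
    rw [tproj_idem]
    exact h.2
  | L φ ih =>
    rintro p ⟨q, hq, rfl⟩
    exact ih _ _ (hHT q hq) (h q hq)
end

section
/- For an epistemic formula φ in which every occurrence of the modal operator L is in the scope of negation, and any belief interpretation ⟨W,H,T⟩: ⟨W,H,T⟩ ⊨ φ if and only if ⟨Wᵗ,H,T⟩ ⊨ φ, where Wᵗ is W with each pair ⟨Hᵢ,Tᵢ⟩ replaced by the total pair ⟨Tᵢ,Tᵢ⟩. -/
lemma tproj_isHT (W : View) : isHTView (tproj W) := by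
  rintro p ⟨q, hq, rfl⟩
  exact subset_rfl

lemma pers (φ : EForm) : ∀ (W : View), isHTView W → ∀ H T : Interp, H ⊆ T →
    esat φ W H T → esat φ (tproj W) T T := by
  induction φ with
  | bot => intro W _ H T _ h; exact h
  | atom a => intro W _ H T hsub h; exact hsub h
  | and φ ψ ih1 ih2 =>
      intro W hHT H T hsub h
      exact ⟨ih1 W hHT H T hsub h.1, ih2 W hHT H T hsub h.2⟩
  | or φ ψ ih1 ih2 =>
      intro W hHT H T hsub h
      cases h with
      | inl h => exact Or.inl (ih1 W hHT H T hsub h)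
      | inr h => exact Or.inr (ih2 W hHT H T hsub h)
  | imp φ ψ ih1 ih2 =>
      intro W hHT H T hsub h
      refine ⟨h.2, ?_⟩
      rw [tproj_idem]
      exact h.2
  | L φ ih =>
      intro W hHT H T hsub h
      rintro p ⟨q, hq, rfl⟩
      exact ih W hHT q.1 q.2 (hHT q hq) (h q hq)

theorem guarded_total_view (φ : EForm) (hφ : guarded φ) (W : View)
    (hW : W.Nonempty) (hHT : isHTView W) (H T : Interp) (hsub : H ⊆ T) :
    esat φ W H T ↔ esat φ (tproj W) H T := by
  induction φ generalizing H T with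
  | bot => exact Iff.rfl
  | atom a => exact Iff.rfl
  | and φ ψ ih1 ih2 =>
      exact and_congr (ih1 hφ.1 H T hsub) (ih2 hφ.2 H T hsub)
  | or φ ψ ih1 ih2 =>
      exact or_congr (ih1 hφ.1 H T hsub) (ih2 hφ.2 H T hsub)
  | L φ _ => exact absurd hφ (by simp [guarded])
  | imp φ ψ ih1 ih2 =>
      cases ψ with
      | bot =>
          show (¬ esat φ W H T ∧ ¬ esat φ (tproj W) T T) ↔
            (¬ esat φ (tproj W) H T ∧ ¬ esat φ (tproj (tproj W)) T T)
          rw [tproj_idem]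
          constructor
          · rintro ⟨_, h2⟩
            exact ⟨fun h => h2 (by
              have := pers φ (tproj W) (tproj_isHT W) H T hsub h
              rwa [tproj_idem] at this), h2⟩
          · rintro ⟨_, h2⟩
            exact ⟨fun h => h2 (pers φ W hHT H T hsub h), h2⟩
      | atom b =>
          refine and_congr (imp_congr (ih1 hφ.1 H T hsub) (ih2 hφ.2 H T hsub)) ?_
          rw [tproj_idem]
      | and ψ1 ψ2 =>
          refine and_congr (imp_congr (ih1 hφ.1 H T hsub) (ih2 hφ.2 H T hsub)) ?_
          rw [tproj_idem]
      | or ψ1 ψ2 =>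
          refine and_congr (imp_congr (ih1 hφ.1 H T hsub) (ih2 hφ.2 H T hsub)) ?_
          rw [tproj_idem]
      | imp ψ1 ψ2 =>
          refine and_congr (imp_congr (ih1 hφ.1 H T hsub) (ih2 hφ.2 H T hsub)) ?_
          rw [tproj_idem]
      | L ψ1 =>
          refine and_congr (imp_congr (ih1 hφ.1 H T hsub) (ih2 hφ.2 H T hsub)) ?_
          rw [tproj_idem]
end

section
/- For a semi-total belief interpretation I = ⟨W,H,T⟩ (all pairs in W are total) and any epistemic formula φ, I is a model of φ if and only if I is a model of the subjective reduct φ^W, where φ^W replaces each maximal subformula Lψ by ⊤ if W ⊨ Lψ and by ⊥ otherwise. -/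
lemma tproj_total (W : View) (hT : totalView W) : tproj W = W := by
  ext p
  obtain ⟨a, b⟩ := p
  constructor
  · rintro ⟨⟨c, d⟩, hq, heq⟩
    have hcd := hT (c, d) hq
    simp only [Prod.mk.injEq] at heq hcd
    subst hcd
    obtain ⟨h1, h2⟩ := heq
    subst h1; subst h2; exact hq
  · intro hp
    have hab := hT (a, b) hp
    simp only at hab
    subst hab
    exact ⟨(a, a), hp, rfl⟩

lemma reduct_pointwise (W : View) (hT : totalView W) (φ : EForm) :
    ∀ H T : Interp, esat φ W H T ↔ esat (e (reductP φ W)) W H T := by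
  induction φ with
  | bot => intro H T; rfl
  | atom a => intro H T; rfl
  | and φ ψ ihφ ihψ =>
    intro H T
    simp only [esat, reductP, e, ihφ, ihψ]
  | or φ ψ ihφ ihψ =>
    intro H T
    simp only [esat, reductP, e, ihφ, ihψ]
  | imp φ ψ ihφ ihψ =>
    intro H T
    simp only [esat, reductP, e, tproj_total W hT, ihφ, ihψ]
  | L φ ih =>
    intro H T
    show (∀ p ∈ W, esat φ W p.1 p.2) ↔ _
    by_cases h : ∀ p ∈ W, esat φ W p.1 p.2
    · simp only [reductP, if_pos h, e, esat, tproj_total W hT]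
      constructor
      · intro _
        exact ⟨fun h => h, fun h => h⟩
      · intro _
        exact h
    · simp only [reductP, if_neg h, e, esat]
      constructor
      · intro hc; exact absurd hc h
      · intro hc; exact absurd hc (by simp)

theorem semi_total_reduct (W : View) (hT : totalView W)
    (H T : Interp) (hsub : H ⊆ T) (φ : EForm) :
    (∀ p ∈ insert (H, T) W, esat φ W p.1 p.2) ↔
    (∀ p ∈ insert (H, T) W, esat (e (reductP φ W)) W p.1 p.2) := by
  constructor <;> intro h p hp
  · exact (reduct_pointwise W hT φ p.1 p.2).mp (h p hp)
  · exact (reduct_pointwise W hT φ p.1 p.2).mpr (h p hp)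
end

section
/- For a propositional (L-free) theory Γ and a belief interpretation I = ⟨W,H,T⟩: I is a model of Γ if and only if every HT-pair ⟨H',T'⟩ in W ∪ {⟨H,T⟩} is an HT-model of Γ. -/
lemma htsat_tot (T : Interp) (φ : PForm) : htsat T T φ ↔ csat T φ := by
  induction φ with
  | bot => simp [htsat, csat]
  | atom a => simp [htsat, csat]
  | and φ ψ ih1 ih2 => simp [htsat, csat, ih1, ih2]
  | or φ ψ ih1 ih2 => simp [htsat, csat, ih1, ih2]
  | imp φ ψ ih1 ih2 => simp [htsat, csat, ih1, ih2]

lemma esat_e (φ : PForm) : ∀ (W : View) (H T : Interp),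
    esat (e φ) W H T ↔ htsat H T φ := by
  induction φ with
  | bot => intros; simp [e, esat, htsat]
  | atom a => intros; simp [e, esat, htsat]
  | and φ ψ ih1 ih2 => intro W H T; simp [e, esat, htsat, ih1, ih2]
  | or φ ψ ih1 ih2 => intro W H T; simp [e, esat, htsat, ih1, ih2]
  | imp φ ψ ih1 ih2 =>
    intro W H T
    simp only [e, esat, htsat, ih1, ih2, htsat_tot]
    tauto

theorem lfree_belief_model (Γ : Set PForm) (W : View) (hHT : isHTView W)
    (H T : Interp) (hsub : H ⊆ T) :
    isBeliefModel W H T (e '' Γ) ↔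
    (∀ p ∈ insert (H, T) W, ∀ φ ∈ Γ, htsat p.1 p.2 φ) := by
  constructor
  · intro h p hp φ hφ
    have := h (e φ) ⟨φ, hφ, rfl⟩ p hp
    rwa [esat_e] at this
  · rintro h φ ⟨ψ, hψ, rfl⟩ p hp
    rw [esat_e]
    exact h p hp ψ hψ
end

section
/- For a propositional (L-free) theory Γ and a total belief interpretation I = ⟨W,T⟩: I is an equilibrium belief model of Γ if and only if every T' ∈ W ∪ {T} is an equilibrium (stable) model of Γ. -/
lemma htsat_tt (φ : PForm) : ∀ T, htsat T T φ ↔ csat T φ := by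
  induction φ <;> intro T <;> simp [htsat, csat, *] <;> tauto

lemma mem_liftV {Ws : Set Interp} {a b : Interp} :
    (a, b) ∈ liftV Ws ↔ a = b ∧ b ∈ Ws := by
  constructor
  · rintro ⟨S, hS, heq⟩
    rw [Prod.mk.injEq] at heq
    exact ⟨heq.1.trans heq.2.symm, by rw [heq.2]; exact hS⟩
  · rintro ⟨rfl, hb⟩
    exact ⟨a, hb, rfl⟩

lemma isBeliefModel_lift_iff (Γ : Set PForm) (Ws : Set Interp) (H T : Interp) :
    isBeliefModel (liftV Ws) H T (e '' Γ) ↔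
      ((∀ φ ∈ Γ, htsat H T φ) ∧ ∀ S ∈ Ws, ∀ φ ∈ Γ, htsat S S φ) := by
  constructor
  · intro h
    refine ⟨fun φ hφ => ?_, fun S hS φ hφ => ?_⟩
    · have := h (e φ) ⟨φ, hφ, rfl⟩ (H, T) (Set.mem_insert _ _)
      rwa [esat_e] at this
    · have := h (e φ) ⟨φ, hφ, rfl⟩ (S, S)
        (Set.mem_insert_iff.2 (Or.inr (mem_liftV.2 ⟨rfl, hS⟩)))
      rwa [esat_e] at this
  · rintro ⟨h1, h2⟩ ψ ⟨φ, hφ, rfl⟩ ⟨a, b⟩ hp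
    rw [esat_e]
    rcases hp with hp | hp
    · rw [Prod.mk.injEq] at hp
      rw [hp.1, hp.2]; exact h1 φ hφ
    · obtain ⟨rfl, hb⟩ := mem_liftV.1 hp
      exact h2 a hb φ hφ

theorem lfree_eq_belief (Γ : Set PForm) (Ws : Set Interp) (T : Interp) :
    eqBelief (liftV Ws) T (e '' Γ) ↔
    (∀ T' ∈ insert T Ws, stable Γ T') := by
  constructor
  · rintro ⟨hbm, hmin⟩
    rw [isBeliefModel_lift_iff] at hbm
    intro T' hT'
    rcases Set.mem_insert_iff.1 hT' with rfl | hT'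
    · refine ⟨hbm.1, ?_⟩
      rintro ⟨H, hHT, hH⟩
      refine hmin ⟨liftV Ws, H, T', ?_, ?_⟩
      · rw [isBeliefModel_lift_iff]
        exact ⟨hH, hbm.2⟩
      · refine ⟨⟨rfl, hHT.1, ?_, ?_⟩, ?_⟩
        · intro p hp; exact ⟨p.1, hp, subset_rfl⟩
        · intro p hp; exact ⟨p.1, hp, subset_rfl⟩
        · rintro ⟨-, rfl, -⟩
          exact hHT.2 subset_rfl
    · refine ⟨hbm.2 T' hT', ?_⟩
      rintro ⟨H, hHT, hH⟩
      refine hmin ⟨(liftV Ws \ {(T', T')}) ∪ {(H, T')}, T, T, ?_, ?_⟩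
      · rintro ψ ⟨φ, hφ, rfl⟩ ⟨a, b⟩ hp
        rw [esat_e]
        rcases hp with hp | hp
        · rw [Prod.mk.injEq] at hp
          rw [hp.1, hp.2]; exact hbm.1 φ hφ
        · rcases hp with ⟨hp, -⟩ | hp
          · obtain ⟨rfl, hb⟩ := mem_liftV.1 hp
            exact hbm.2 a hb φ hφ
          · rw [Set.mem_singleton_iff, Prod.mk.injEq] at hp
            rw [hp.1, hp.2]; exact hH φ hφ
      · refine ⟨⟨rfl, subset_rfl, ?_, ?_⟩, ?_⟩
        · rintro ⟨a, b⟩ hab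
          obtain ⟨rfl, hb⟩ := mem_liftV.1 hab
          by_cases hST : a = T'
          · subst hST
            exact ⟨H, Or.inr rfl, hHT.1⟩
          · refine ⟨a, Or.inl ⟨mem_liftV.2 ⟨rfl, hb⟩, ?_⟩, subset_rfl⟩
            simp [Prod.ext_iff, hST]
        · rintro ⟨a, b⟩ (⟨hp, -⟩ | hp)
          · exact ⟨a, hp, subset_rfl⟩
          · rw [Set.mem_singleton_iff, Prod.mk.injEq] at hp
            refine ⟨T', ?_, by rw [hp.1]; exact hHT.1⟩
            rw [hp.2]; exact mem_liftV.2 ⟨rfl, hT'⟩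
        · rintro ⟨hW, -, -⟩
          have hmem : (H, T') ∈ liftV Ws := hW ▸ Or.inr rfl
          obtain ⟨rfl, -⟩ := mem_liftV.1 hmem
          exact hHT.2 subset_rfl
  · intro hst
    have hbm : isBeliefModel (liftV Ws) T T (e '' Γ) := by
      rw [isBeliefModel_lift_iff]
      exact ⟨(hst T (Set.mem_insert _ _)).1,
        fun S hS => (hst S (Set.mem_insert_iff.2 (Or.inr hS))).1⟩
    refine ⟨hbm, ?_⟩
    rintro ⟨W', H', T2, hbm', ⟨⟨hT2, hH'T, h1, h2⟩, hne⟩⟩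
    have hW'tot : ∀ a b, (a, b) ∈ W' → a = b ∧ b ∈ Ws := by
      intro a b hp
      obtain ⟨H'', hH''W, hsub⟩ := h2 (a, b) hp
      obtain ⟨hH''b, hbW⟩ := mem_liftV.1 hH''W
      have hab : a ⊆ b := by rw [hH''b] at hsub; exact hsub
      have hpsat : ∀ φ ∈ Γ, htsat a b φ := by
        intro φ hφ
        have := hbm' (e φ) ⟨φ, hφ, rfl⟩ (a, b) (Set.mem_insert_iff.2 (Or.inr hp))
        rwa [esat_e] at this
      refine ⟨?_, hbW⟩
      by_contra hne2
      exact (hst b (Set.mem_insert_iff.2 (Or.inr hbW))).2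
        ⟨a, HasSubset.Subset.ssubset_of_ne hab hne2, hpsat⟩
    have hH'sat : ∀ φ ∈ Γ, htsat H' T φ := by
      intro φ hφ
      have := hbm' (e φ) ⟨φ, hφ, rfl⟩ (H', T2) (Set.mem_insert _ _)
      rw [esat_e, hT2] at this
      exact this
    have hH'eq : H' = T := by
      by_contra hne2
      exact (hst T (Set.mem_insert _ _)).2
        ⟨H', HasSubset.Subset.ssubset_of_ne hH'T hne2, hH'sat⟩
    have hWeq : W' = liftV Ws := by
      ext ⟨a, b⟩
      constructor
      · intro hp
        obtain ⟨rfl, hbW⟩ := hW'tot a b hp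
        exact mem_liftV.2 ⟨rfl, hbW⟩
      · intro hp
        obtain ⟨rfl, hb⟩ := mem_liftV.1 hp
        obtain ⟨H'', hH'', hsub⟩ := h1 (a, a) (mem_liftV.2 ⟨rfl, hb⟩)
        have htot := hW'tot H'' a hH''
        rwa [htot.1] at hH''
    exact hne ⟨hWeq, hH'eq, hT2⟩
end

section
/- If W is an S5-interpretation such that ⟨W,T⟩ is an equilibrium belief (KD45-equilibrium) model of a theory Γ for every T ∈ W, then W is an S5-equilibrium model of Γ. -/
theorem eqbelief_forall_imp_s5eq (Γ : Set EForm) (Ws : Set Interp)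
    (hne : Ws.Nonempty) (h : ∀ T ∈ Ws, eqBelief (liftV Ws) T Γ) :
    s5eq (liftV Ws) Γ := by
  obtain ⟨T₀, hT₀⟩ := hne
  refine ⟨?_, ?_, ?_⟩
  · rintro p ⟨T, _, rfl⟩; rfl
  · intro φ hφ p hp
    exact (h T₀ hT₀).1 φ hφ p (Set.mem_insert_of_mem _ hp)
  · rintro ⟨W', hW'mod, ⟨⟨hle1, hle2⟩, hne'⟩⟩
    -- W' has a non-total pair
    have hnt : ∃ H T, (H, T) ∈ W' ∧ H ≠ T := by
      by_contra hc
      push_neg at hc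
      apply hne'
      apply Set.eq_of_subset_of_subset
      · rintro ⟨H, T⟩ hp
        obtain ⟨H'', hH''W, hsub⟩ := hle2 _ hp
        obtain ⟨T', hT', heq⟩ := hH''W
        have : H'' = T' ∧ T = T' := by
          constructor
          · exact congrArg Prod.fst heq
          · exact congrArg Prod.snd heq
        have hHT : H = T := hc H T hp
        subst hHT
        exact ⟨T', hT', by rw [Prod.mk.injEq]; exact ⟨this.2, this.2⟩⟩
      · rintro p ⟨T, hT, rfl⟩
        obtain ⟨H', hH'W', hsub⟩ := hle1 (T, T) ⟨T, hT, rfl⟩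
        have := hc H' T hH'W'
        subst this
        exact hH'W'
    obtain ⟨H, T, hHT, hneq⟩ := hnt
    obtain ⟨H'', hH''W, hsub⟩ := hle2 _ hHT
    obtain ⟨T', hT', heq⟩ := hH''W
    have h1 : H'' = T' := congrArg Prod.fst heq
    have h2 : T = T' := congrArg Prod.snd heq
    subst h1; subst h2
    -- T ∈ Ws (as T'), H ⊆ T, H ≠ T
    apply (h T hT').2
    refine ⟨W', H, T, ?_, ⟨⟨rfl, hsub, ?_, ?_⟩, ?_⟩⟩
    · intro φ hφ p hp
      rcases Set.mem_insert_iff.mp hp with hp | hp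
      · subst hp; exact hW'mod φ hφ _ hHT
      · exact hW'mod φ hφ _ hp
    · intro p hp; exact hle1 p hp
    · intro p hp; exact hle2 p hp
    · rintro ⟨-, rfl, -⟩; exact hneq rfl
end

section
/- Every autoepistemic (FAEEL equilibrium) world view of a theory Γ is also a weak autoepistemic world view of Γ. -/
theorem auto_imp_weak (Γ : Set EForm) (Ws : Set Interp)
    (h : autoWV Ws Γ) : weakWV Ws Γ := by
  unfold weakWV
  ext T
  simp only [Set.mem_setOf_eq]
  constructor
  · intro hT
    have hEq : eqBelief (liftV Ws) T Γ := by
      have := h ▸ hT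
      exact this
    exact ⟨hEq.1, fun ⟨W', H', T', _, hbm, hlt⟩ => hEq.2 ⟨W', H', T', hbm, hlt⟩⟩
  · rintro ⟨hbm, hmin⟩
    have hgoal : eqBelief (liftV Ws) T Γ := by
      refine ⟨hbm, ?_⟩
      rintro ⟨W', H', T', hbm', ⟨⟨hTT, hH, h3, h4⟩, hne⟩⟩
      by_cases hW' : W' = liftV Ws
      · -- W' is total, contradicting weak minimality
        apply hmin
        refine ⟨W', H', T', ?_, hbm', ⟨⟨hTT, hH, h3, h4⟩, hne⟩⟩
        intro p hp
        rw [hW'] at hp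
        obtain ⟨S, _, hpe⟩ := hp
        simp_all
      · -- W' contains a strictly non-total pair
        have hnt : ∃ p ∈ W', p.1 ≠ p.2 := by
          by_contra hc
          push_neg at hc
          apply hW'
          ext q
          constructor
          · intro hq
            obtain ⟨H'', hmem, hsub⟩ := h4 q hq
            obtain ⟨S, hS, hpe⟩ := hmem
            have hq2 : q.2 ∈ Ws := by
              have : H'' = S ∧ q.2 = S := by
                constructor
                · exact congrArg Prod.fst hpe
                · exact congrArg Prod.snd hpe
              rw [this.2]; exact hS
            have := hc q hq
            refine ⟨q.2, hq2, ?_⟩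
            exact Prod.ext this rfl
          · intro hq
            obtain ⟨S, hS, hpe⟩ := hq
            have hqW : ((S : Interp), S) ∈ (liftV Ws) := ⟨S, hS, rfl⟩
            obtain ⟨H'', hmem, hsub⟩ := h3 (S, S) hqW
            have := hc _ hmem
            simp only at this
            rw [this] at hmem hsub
            have : q = (S, S) := hpe
            rw [this]
            exact hmem
        obtain ⟨p, hpW', hpne⟩ := hnt
        -- p.2 ∈ Ws and p.1 ⊆ p.2
        obtain ⟨H'', hmem, hsub⟩ := h4 p hpW'
        obtain ⟨S, hS, hpe⟩ := hmem
        have hH'' : H'' = S := congrArg Prod.fst hpe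
        have hp2 : p.2 = S := congrArg Prod.snd hpe
        have hp2W : p.2 ∈ Ws := hp2 ▸ hS
        have hsub' : p.1 ⊆ p.2 := by rw [hp2, ← hH'']; exact hsub
        -- p.2 is an equilibrium belief model point, contradiction
        have hEqS : eqBelief (liftV Ws) p.2 Γ := by
          have := h ▸ hp2W
          exact this
        apply hEqS.2
        refine ⟨W', p.1, p.2, ?_, ⟨⟨rfl, hsub', h3, h4⟩, ?_⟩⟩
        · intro φ hφ q hq
          rcases hq with hq | hq
          · have : q = p := hq
            rw [this]
            exact hbm' φ hφ p (Set.mem_insert_of_mem _ hpW')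
          · exact hbm' φ hφ q (Set.mem_insert_of_mem _ hq)
        · rintro ⟨-, hpp, -⟩
          exact hpne hpp
    rw [h]
    exact hgoal
end

section
/- A belief view W is a weak autoepistemic world view of a theory Γ if and only if W is a G91-world view of Γ, i.e., W = SM[Γ^W] where Γ^W is the subjective reduct of Γ with respect to W. -/
lemma tproj_lift (Ws : Set Interp) : tproj (liftV Ws) = liftV Ws := by
  ext p
  constructor
  · rintro ⟨q, ⟨T, hT, rfl⟩, rfl⟩
    exact ⟨T, hT, rfl⟩
  · rintro ⟨T, hT, rfl⟩
    exact ⟨(T, T), ⟨T, hT, rfl⟩, rfl⟩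

lemma total_lift (Ws : Set Interp) : totalView (liftV Ws) := by
  rintro p ⟨T, hT, rfl⟩
  rfl

lemma ht_tt : ∀ (φ : PForm) (T : Interp), htsat T T φ ↔ csat T φ := by
  intro φ
  induction φ with
  | bot => intro T; simp [htsat, csat]
  | atom a => intro T; simp [htsat, csat]
  | and φ ψ ihφ ihψ => intro T; simp [htsat, csat, ihφ, ihψ]
  | or φ ψ ihφ ihψ => intro T; simp [htsat, csat, ihφ, ihψ]
  | imp φ ψ ihφ ihψ => intro T; simp [htsat, csat, ihφ, ihψ]

lemma esat_reduct (Ws : Set Interp) : ∀ (φ : EForm) (H T : Interp),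
    esat φ (liftV Ws) H T ↔ htsat H T (reductP φ (liftV Ws)) := by
  intro φ
  induction φ with
  | bot => intro H T; simp [esat, reductP, htsat]
  | atom a => intro H T; simp [esat, reductP, htsat]
  | and φ ψ ihφ ihψ => intro H T; simp [esat, reductP, htsat, ihφ, ihψ]
  | or φ ψ ihφ ihψ => intro H T; simp [esat, reductP, htsat, ihφ, ihψ]
  | imp φ ψ ihφ ihψ =>
    intro H T
    show (esat φ (liftV Ws) H T → esat ψ (liftV Ws) H T) ∧
      (esat φ (tproj (liftV Ws)) T T → esat ψ (tproj (liftV Ws)) T T) ↔ _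
    rw [tproj_lift]
    show _ ↔ (csat T (reductP φ (liftV Ws)) → csat T (reductP ψ (liftV Ws))) ∧
      (htsat H T (reductP φ (liftV Ws)) → htsat H T (reductP ψ (liftV Ws)))
    rw [← ht_tt, ← ht_tt, ← ihφ, ← ihψ, ← ihφ, ← ihψ]
    tauto
  | L φ ih =>
    intro H T
    show (∀ p ∈ liftV Ws, esat φ (liftV Ws) p.1 p.2) ↔ _
    unfold reductP
    split_ifs with h
    · exact iff_of_true h ⟨id, id⟩
    · exact iff_of_false h id

lemma bleq_total_eq {W' W : View} {H' T' H T : Interp}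
    (hW : totalView W) (hW' : totalView W')
    (h : bleq W' H' T' W H T) : W' = W := by
  obtain ⟨-, -, h1, h2⟩ := h
  ext p
  obtain ⟨a, b⟩ := p
  constructor
  · intro hp
    obtain ⟨H'', hmem, _⟩ := h2 (a, b) hp
    have hab : a = b := hW' (a, b) hp
    have hH : H'' = b := hW (H'', b) hmem
    rw [hab]
    rwa [hH] at hmem
  · intro hp
    obtain ⟨H'', hmem, _⟩ := h1 (a, b) hp
    have hab : a = b := hW (a, b) hp
    have hH : H'' = b := hW' (H'', b) hmem
    rw [hab]
    rwa [hH] at hmem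

lemma weakEq_iff_stable (Γ : Set EForm) (Ws : Set Interp)
    (A : ∀ φ ∈ Γ, ∀ p ∈ liftV Ws, esat φ (liftV Ws) p.1 p.2) (T : Interp) :
    weakEqBelief (liftV Ws) T Γ ↔
      stable ((fun φ => reductP φ (liftV Ws)) '' Γ) T := by
  constructor
  · rintro ⟨hmod, hmin⟩
    constructor
    · rintro r ⟨φ, hφ, rfl⟩
      exact (esat_reduct Ws φ T T).mp (hmod φ hφ (T, T) (Set.mem_insert _ _))
    · rintro ⟨H, hHT, hH⟩
      apply hmin
      refine ⟨liftV Ws, H, T, total_lift Ws, ?_, ?_, ?_⟩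
      · intro φ hφ p hp
        rcases Set.mem_insert_iff.mp hp with heq | hp
        · subst heq
          exact (esat_reduct Ws φ H T).mpr (hH _ ⟨φ, hφ, rfl⟩)
        · exact A φ hφ p hp
      · refine ⟨rfl, hHT.subset, ?_, ?_⟩
        · intro p hp
          exact ⟨p.1, by simpa using hp, subset_rfl⟩
        · intro p hp
          exact ⟨p.1, by simpa using hp, subset_rfl⟩
      · rintro ⟨-, hHeq, -⟩
        exact hHT.ne hHeq
  · rintro ⟨hsat, hmin⟩
    constructor
    · intro φ hφ p hp
      rcases Set.mem_insert_iff.mp hp with heq | hp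
      · subst heq
        exact (esat_reduct Ws φ T T).mpr (hsat _ ⟨φ, hφ, rfl⟩)
      · exact A φ hφ p hp
    · rintro ⟨W', H', T', htot, hbm, hble, hne⟩
      have hWeq : W' = liftV Ws := bleq_total_eq (total_lift Ws) htot hble
      subst hWeq
      obtain ⟨hT'eq, hH'sub, -, -⟩ := hble
      rw [hT'eq] at hbm
      have hH'ne : H' ≠ T := fun heq => hne ⟨rfl, heq, hT'eq⟩
      apply hmin
      refine ⟨H', ⟨hH'sub, fun hsub => hH'ne (Set.Subset.antisymm hH'sub hsub)⟩, ?_⟩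
      rintro r ⟨φ, hφ, rfl⟩
      exact (esat_reduct Ws φ H' T).mp (hbm φ hφ (H', T) (Set.mem_insert _ _))

theorem weak_iff_g91 (Γ : Set EForm) (Ws : Set Interp) :
    weakWV Ws Γ ↔ g91wv Ws Γ := by
  constructor
  · intro h
    unfold weakWV at h
    have A : ∀ φ ∈ Γ, ∀ p ∈ liftV Ws, esat φ (liftV Ws) p.1 p.2 := by
      rintro φ hφ p ⟨T'', hT'', rfl⟩
      have h2 : weakEqBelief (liftV Ws) T'' Γ := (Set.ext_iff.mp h T'').mp hT''
      exact h2.1 φ hφ (T'', T'') (Set.mem_insert_of_mem _ ⟨T'', hT'', rfl⟩)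
    unfold g91wv
    ext T
    exact (Set.ext_iff.mp h T).trans (weakEq_iff_stable Γ Ws A T)
  · intro h
    unfold g91wv at h
    have A : ∀ φ ∈ Γ, ∀ p ∈ liftV Ws, esat φ (liftV Ws) p.1 p.2 := by
      rintro φ hφ p ⟨T'', hT'', rfl⟩
      have h2 : stable ((fun φ => reductP φ (liftV Ws)) '' Γ) T'' :=
        (Set.ext_iff.mp h T'').mp hT''
      exact (esat_reduct Ws φ T'' T'').mpr (h2.1 _ ⟨φ, hφ, rfl⟩)
    unfold weakWV
    ext T
    exact (Set.ext_iff.mp h T).trans (weakEq_iff_stable Γ Ws A T).symm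
end

section
/- If W is an S5-equilibrium model of a theory Γ, T ∈ W, and ⟨W,T⟩ is a weak KD45-equilibrium model of Γ, then ⟨W,T⟩ is a KD45-equilibrium model of Γ. -/
theorem s5eq_weak_imp_kd45eq (Γ : Set EForm) (Ws : Set Interp) (T : Interp)
    (h1 : s5eq (liftV Ws) Γ) (h2 : T ∈ Ws)
    (h3 : weakEqBelief (liftV Ws) T Γ) :
    eqBelief (liftV Ws) T Γ := by
  obtain ⟨htot, hs5m, hmin⟩ := h1
  refine ⟨h3.1, ?_⟩
  rintro ⟨W', H', T', hbm, hblt⟩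
  obtain ⟨⟨hT, hH, hm1, hm2⟩, hne⟩ := hblt
  have hle : s5le W' (liftV Ws) := ⟨hm1, hm2⟩
  have hs5' : s5model W' Γ := fun φ hφ p hp => hbm φ hφ p (Set.mem_insert_of_mem _ hp)
  by_cases hW : W' = liftV Ws
  · exact h3.2 ⟨W', H', T', hW ▸ htot, hbm, ⟨⟨hT, hH, hm1, hm2⟩, hne⟩⟩
  · exact hmin ⟨W', hs5', hle, hW⟩
end
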